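/- arXiv:2201.12663 — 5 statements merged into one kernel-verified Lean document; each statement's English description precedes it below -/
import Mathlib

section
/- Let d ≥ 1, n ≥ 1, R ≥ 1 and let A ∈ ℝ^{n×⋯×n} (order d) have the canonical representation A = Σ_{ν=1}^{R} ξ_ν u_ν^{(1)} ⊗ ⋯ ⊗ u_ν^{(d)} with ‖u_ν^{(ℓ)}‖ = 1 for all ℓ, ν. For each ℓ, let the side matrix U^{(ℓ)} = [u_1^{(ℓ)} ⋯ u_R^{(ℓ)}] ∈ ℝ^{n×R} have a singular value decomposition U^{(ℓ)} = Σ_{k=1}^{m} σ_{ℓ,k} z_k^{(ℓ)} (v_k^{(ℓ)})^T with m = min(n,R), σ_{ℓ,k} ≥ 0, {z_k^{(ℓ)}}_k orthonormal in ℝ^n and {v_k^{(ℓ)}}_k orthonormal in ℝ^R. Given truncation ranks r_ℓ ≤ m, set W^{(ℓ)} = Σ_{k=1}^{r_ℓ} σ_{ℓ,k} z_k^{(ℓ)} (v_k^{(ℓ)})^T and define the RHOSVD approximation A⁰ = Σ_{ν=1}^{R} ξ_ν w_ν^{(1)} ⊗ ⋯ ⊗ w_ν^{(d)}, where w_ν^{(ℓ)}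 ∈ ℝ^n is the ν-th column of W^{(ℓ)}. Then ‖A − A⁰‖ ≤ (Σ_{ν=1}^{R} ξ_ν²)^{1/2} · Σ_{ℓ=1}^{d} ( Σ_{k=r_ℓ+1}^{m} σ_{ℓ,k}² )^{1/2} in the Frobenius norm. -/
open Finset

private lemma sum_pi_prod {d n : ℕ} (F : Fin d → Fin n → ℝ) :
    ∑ i : Fin d → Fin n, ∏ j, F j (i j) = ∏ j, ∑ x, F j x := by
  rw [Finset.prod_univ_sum, Fintype.piFinset_univ]

private lemma core {d n R m : ℕ} (ℓ : Fin d)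
    (c : Fin R → ℝ) (s : Fin m → ℝ)
    (zz : Fin m → Fin n → ℝ) (vv : Fin m → Fin R → ℝ)
    (g : Fin R → Fin d → Fin n → ℝ)
    (hzz : ∀ k k', ∑ x, zz k x * zz k' x = if k = k' then (1:ℝ) else 0)
    (hvv : ∀ k, ∑ ν, (vv k ν)^2 ≤ 1)
    (hg : ∀ ν j, ∑ x, (g ν j x)^2 ≤ 1) :
    ∑ i : Fin d → Fin n,
        (∑ p : Fin R × Fin m, (c p.1 * s p.2 * vv p.2 p.1) *
          ∏ j, (if j = ℓ then zz p.2 (i j) else g p.1 j (i j)))^2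
      ≤ (∑ ν, c ν ^ 2) * (∑ k, s k ^ 2) := by
  classical
  set C : Fin R × Fin m → ℝ := fun p => c p.1 * s p.2 * vv p.2 p.1 with hC
  set P : Fin R × Fin m → (Fin d → Fin n) → ℝ :=
    fun p i => ∏ j, (if j = ℓ then zz p.2 (i j) else g p.1 j (i j)) with hP
  set Gr : Fin R → Fin R → ℝ :=
    fun ν ν' => ∏ j ∈ univ.erase ℓ, ∑ x, g ν j x * g ν' j x with hGrdef
  have hPP : ∀ p q : Fin R × Fin m, ∑ i : Fin d → Fin n, P p i * P q i
      = (if p.2 = q.2 then (1:ℝ) else 0) * Gr p.1 q.1 := by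
    intro p q
    have h1 : ∀ i : Fin d → Fin n, P p i * P q i
        = ∏ j, ((fun (j : Fin d) (x : Fin n) =>
            (if j = ℓ then zz p.2 x else g p.1 j x) *
            (if j = ℓ then zz q.2 x else g q.1 j x)) j (i j)) := by
      intro i; rw [hP, ← Finset.prod_mul_distrib]
    calc ∑ i : Fin d → Fin n, P p i * P q i
        = ∏ j, ∑ x, ((if j = ℓ then zz p.2 x else g p.1 j x) *
                     (if j = ℓ then zz q.2 x else g q.1 j x)) := by
          simp_rw [h1]
          exact sum_pi_prod (fun j x => (if j = ℓ then zz p.2 x else g p.1 j x) *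
            (if j = ℓ then zz q.2 x else g q.1 j x))
      _ = _ := by
          rw [← Finset.mul_prod_erase univ _ (mem_univ ℓ)]
          congr 1
          · simp [hzz p.2 q.2]
          · exact Finset.prod_congr rfl fun j hj => by
              simp [Finset.ne_of_mem_erase hj]
  have hGr : ∀ ν ν', |Gr ν ν'| ≤ 1 := by
    intro ν ν'
    rw [hGrdef, Finset.abs_prod]
    apply Finset.prod_le_one (fun j _ => abs_nonneg _)
    intro j _
    have h2 := Finset.sum_mul_sq_le_sq_mul_sq univ (g ν j) (g ν' j)
    have h3 : (0:ℝ) ≤ ∑ x, (g ν' j x)^2 := Finset.sum_nonneg fun x _ => sq_nonneg _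
    nlinarith [sq_abs (∑ x, g ν j x * g ν' j x), abs_nonneg (∑ x, g ν j x * g ν' j x),
      hg ν j, hg ν' j]
  calc ∑ i : Fin d → Fin n, (∑ p, C p * P p i)^2
      = ∑ p, ∑ q, (C p * C q) * ∑ i : Fin d → Fin n, P p i * P q i := by
        simp_rw [pow_two, Finset.sum_mul_sum]
        rw [Finset.sum_comm]
        refine Finset.sum_congr rfl fun p _ => ?_
        rw [Finset.sum_comm]
        refine Finset.sum_congr rfl fun q _ => ?_
        rw [Finset.mul_sum]
        exact Finset.sum_congr rfl fun i _ => by ring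
    _ = ∑ p, ∑ q, (C p * C q) * ((if p.2 = q.2 then (1:ℝ) else 0) * Gr p.1 q.1) := by
        simp_rw [hPP]
    _ ≤ ∑ p, ∑ q, (|C p| * |C q|) * (if p.2 = q.2 then (1:ℝ) else 0) := by
        refine Finset.sum_le_sum fun p _ => Finset.sum_le_sum fun q _ => ?_
        by_cases h : p.2 = q.2
        · simp only [h, if_true, mul_one]
          calc C p * C q * (1 * Gr p.1 q.1) ≤ |C p * C q * (1 * Gr p.1 q.1)| := le_abs_self _
            _ = |C p| * |C q| * |Gr p.1 q.1| := by
                rw [one_mul, abs_mul, abs_mul]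
            _ ≤ |C p| * |C q| * 1 := by
                have := mul_nonneg (abs_nonneg (C p)) (abs_nonneg (C q))
                nlinarith [hGr p.1 q.1]
            _ = |C p| * |C q| := mul_one _
        · simp [h]
    _ = ∑ k : Fin m, (∑ ν, |C (ν, k)|)^2 := by
        rw [Fintype.sum_prod_type]
        simp_rw [Fintype.sum_prod_type]
        rw [Finset.sum_comm]
        refine Finset.sum_congr rfl fun k _ => ?_
        rw [pow_two, Finset.sum_mul_sum]
        refine Finset.sum_congr rfl fun ν _ => Finset.sum_congr rfl fun ν' _ => ?_
        simp [mul_ite, Finset.sum_ite_eq]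
    _ ≤ ∑ k : Fin m, (∑ ν, c ν ^ 2) * s k ^ 2 := by
        refine Finset.sum_le_sum fun k _ => ?_
        have h4 : ∀ ν, |C (ν, k)| = (|c ν| * |vv k ν|) * |s k| := by
          intro ν; rw [hC]; simp only [abs_mul]; ring
        simp_rw [h4, ← Finset.sum_mul]
        rw [mul_pow]
        have h5 : (∑ ν, |c ν| * |vv k ν|)^2 ≤ (∑ ν, c ν ^2) * ∑ ν, (vv k ν)^2 := by
          have := Finset.sum_mul_sq_le_sq_mul_sq univ (fun ν => |c ν|) (fun ν => |vv k ν|)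
          simpa [sq_abs] using this
        have h6 : (∑ ν, c ν ^2) * (∑ ν, (vv k ν)^2) ≤ (∑ ν, c ν ^2) * 1 := by
          have : (0:ℝ) ≤ ∑ ν, c ν ^2 := Finset.sum_nonneg fun ν _ => sq_nonneg _
          exact mul_le_mul_of_nonneg_left (hvv k) this
        have h7 : |s k| ^2 = s k ^2 := sq_abs _
        nlinarith [sq_nonneg (s k)]
    _ = (∑ ν, c ν ^ 2) * (∑ k, s k ^ 2) := by rw [← Finset.mul_sum]

private lemma sum_sq_of_orth {m n : ℕ} (a : Fin m → ℝ) (zz : Fin m → Fin n → ℝ)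
    (hzz : ∀ k k', ∑ x, zz k x * zz k' x = if k = k' then (1:ℝ) else 0) :
    ∑ x, (∑ k, a k * zz k x)^2 = ∑ k, a k ^2 := by
  have h1 : ∀ x : Fin n, (∑ k, a k * zz k x)^2
      = ∑ k, ∑ k', (a k * a k') * (zz k x * zz k' x) := by
    intro x
    rw [pow_two, Finset.sum_mul_sum]
    exact Finset.sum_congr rfl fun k _ => Finset.sum_congr rfl fun k' _ => by ring
  simp_rw [h1]
  rw [Finset.sum_comm]
  refine Finset.sum_congr rfl fun k _ => ?_
  rw [Finset.sum_comm]
  have h2 : ∀ k' : Fin m, ∑ x, (a k * a k') * (zz k x * zz k' x)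
      = if k = k' then a k * a k' else 0 := by
    intro k'
    rw [← Finset.mul_sum, hzz k k']
    simp
  simp_rw [h2]
  simp [pow_two]

private lemma sqrt_sum_sq_sum_le {ι κ : Type*} [Fintype ι] [Fintype κ] (F : κ → ι → ℝ) :
    Real.sqrt (∑ i, (∑ t, F t i)^2) ≤ ∑ t, Real.sqrt (∑ i, (F t i)^2) := by
  have h : ∀ (f : ι → ℝ), Real.sqrt (∑ i, (f i)^2)
      = ‖(WithLp.linearEquiv 2 ℝ (ι → ℝ)).symm f‖ := by
    intro f
    rw [EuclideanSpace.norm_eq]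
    simp [Real.norm_eq_abs, sq_abs]
  calc Real.sqrt (∑ i, (∑ t, F t i)^2)
      = ‖(WithLp.linearEquiv 2 ℝ (ι → ℝ)).symm (fun i => ∑ t, F t i)‖ := h _
    _ = ‖∑ t, (WithLp.linearEquiv 2 ℝ (ι → ℝ)).symm (F t)‖ := by
        congr 1
        rw [← map_sum]
        congr 1
        ext i
        rw [Finset.sum_apply]
    _ ≤ ∑ t, ‖(WithLp.linearEquiv 2 ℝ (ι → ℝ)).symm (F t)‖ := norm_sum_le _ _
    _ = ∑ t, Real.sqrt (∑ i, (F t i)^2) :=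
        Finset.sum_congr rfl fun t _ => (h (F t)).symm


set_option maxHeartbeats 1000000 in
/-- **RHOSVD error bound** (Theorem 2.1, Khoromskaia–Khoromskij).
Given a rank-`R` canonical tensor `A` with normalized skeleton vectors and SVDs of the
side matrices, the RHOSVD approximation `A⁰` obtained by rank-`r ℓ` truncation of each
side matrix satisfies
`‖A − A⁰‖ ≤ ‖ξ‖ · Σ_ℓ (Σ_{k > r_ℓ} σ_{ℓ,k}²)^{1/2}` in the Frobenius norm. -/
theorem rhosvd_error_bound
    (d n R : ℕ) (hd : 1 ≤ d) (hn : 1 ≤ n) (hR : 1 ≤ R)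
    (ξ : Fin R → ℝ)
    (u : Fin d → Fin R → Fin n → ℝ)
    (hu_norm : ∀ ℓ ν, ∑ i, (u ℓ ν i) ^ 2 = 1)
    (σ : Fin d → Fin (min n R) → ℝ)
    (z : Fin d → Fin (min n R) → Fin n → ℝ)
    (v : Fin d → Fin (min n R) → Fin R → ℝ)
    (hσ : ∀ ℓ k, 0 ≤ σ ℓ k)
    (hz : ∀ ℓ k k', ∑ i, z ℓ k i * z ℓ k' i = if k = k' then (1:ℝ) else 0)
    (hv : ∀ ℓ k k', ∑ ν, v ℓ k ν * v ℓ k' ν = if k = k' then (1:ℝ) else 0)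
    (hSVD : ∀ ℓ ν i, u ℓ ν i = ∑ k, σ ℓ k * z ℓ k i * v ℓ k ν)
    (r : Fin d → ℕ) (hr : ∀ ℓ, r ℓ ≤ min n R)
    (w : Fin d → Fin R → Fin n → ℝ)
    (hw : ∀ ℓ ν i, w ℓ ν i = ∑ k : Fin (min n R), if (k : ℕ) < r ℓ then σ ℓ k * z ℓ k i * v ℓ k ν else 0)
    (A A0 : (Fin d → Fin n) → ℝ)
    (hA : ∀ i, A i = ∑ ν, ξ ν * ∏ ℓ, u ℓ ν (i ℓ))
    (hA0 : ∀ i, A0 i = ∑ ν, ξ ν * ∏ ℓ, w ℓ ν (i ℓ)) :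
    Real.sqrt (∑ i, (A i - A0 i) ^ 2) ≤
      Real.sqrt (∑ ν, (ξ ν) ^ 2) *
        ∑ ℓ, Real.sqrt (∑ k : Fin (min n R), if r ℓ ≤ (k : ℕ) then (σ ℓ k) ^ 2 else 0) := by
  classical
  -- squared norms of columns
  have hu_sq : ∀ ℓ ν, ∑ k : Fin (min n R), (σ ℓ k * v ℓ k ν)^2 = 1 := by
    intro ℓ ν
    have e1 : ∀ x, u ℓ ν x = ∑ k : Fin (min n R), (σ ℓ k * v ℓ k ν) * z ℓ k x := fun x => by
      rw [hSVD]; exact Finset.sum_congr rfl fun k _ => by ring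
    calc ∑ k : Fin (min n R), (σ ℓ k * v ℓ k ν)^2
        = ∑ x, (∑ k : Fin (min n R), (σ ℓ k * v ℓ k ν) * z ℓ k x)^2 := (sum_sq_of_orth _ _ (hz ℓ)).symm
      _ = ∑ x, (u ℓ ν x)^2 := Finset.sum_congr rfl fun x _ => by rw [← e1]
      _ = 1 := hu_norm ℓ ν
  have hw_sq : ∀ ℓ ν, ∑ x, (w ℓ ν x)^2 ≤ 1 := by
    intro ℓ ν
    have e2 : ∀ x, w ℓ ν x
        = ∑ k : Fin (min n R), (if (k:ℕ) < r ℓ then σ ℓ k * v ℓ k ν else 0) * z ℓ k x := fun x => by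
      rw [hw]
      refine Finset.sum_congr rfl fun k _ => ?_
      split_ifs with h
      · ring
      · simp
    calc ∑ x, (w ℓ ν x)^2
        = ∑ k : Fin (min n R), (if (k:ℕ) < r ℓ then σ ℓ k * v ℓ k ν else 0)^2 := by
          simp_rw [e2]; exact sum_sq_of_orth _ _ (hz ℓ)
      _ ≤ ∑ k : Fin (min n R), (σ ℓ k * v ℓ k ν)^2 := by
          refine Finset.sum_le_sum fun k _ => ?_
          split_ifs with h
          · exact le_refl _
          · simpa using sq_nonneg (σ ℓ k * v ℓ k ν)
      _ = 1 := hu_sq ℓ ν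
  -- the telescoping family
  set B : ℕ → (Fin d → Fin n) → ℝ :=
    fun t i => ∑ ν, ξ ν * ∏ j : Fin d, (if (j:ℕ) < t then w j ν (i j) else u j ν (i j)) with hBdef
  have hB0 : ∀ i, B 0 i = A i := by
    intro i; rw [hA, hBdef]
    simp
  have hBd : ∀ i, B d i = A0 i := by
    intro i; rw [hA0, hBdef]
    simp only
    exact Finset.sum_congr rfl fun ν _ => by
      congr 1
      exact Finset.prod_congr rfl fun j _ => by rw [if_pos j.is_lt]
  have htele : ∀ i, A i - A0 i = ∑ ℓ : Fin d, (B ℓ i - B ((ℓ:ℕ)+1) i) := by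
    intro i
    rw [Fin.sum_univ_eq_sum_range (fun t => B t i - B (t+1) i) d,
      Finset.sum_range_sub' (fun t => B t i), hB0, hBd]
  -- the difference as a sum of rank-one terms
  have hdiff : ∀ (ℓ : Fin d) (i : Fin d → Fin n),
      B ℓ i - B ((ℓ:ℕ)+1) i = ∑ p : Fin R × Fin (min n R),
        (ξ p.1 * (if r ℓ ≤ (p.2:ℕ) then σ ℓ p.2 else 0) * v ℓ p.2 p.1) *
        ∏ j : Fin d, (if j = ℓ then z ℓ p.2 (i j)
              else if (j:ℕ) < (ℓ:ℕ) then w j p.1 (i j) else u j p.1 (i j)) := by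
    intro ℓ i
    rw [Fintype.sum_prod_type, hBdef]
    simp only
    rw [← Finset.sum_sub_distrib]
    refine Finset.sum_congr rfl fun ν _ => ?_
    set P : ℝ := ∏ j ∈ univ.erase ℓ, (if (j:ℕ) < (ℓ:ℕ) then w j ν (i j) else u j ν (i j))
      with hPdef
    have hf : ∏ j : Fin d, (if (j:ℕ) < (ℓ:ℕ) then w j ν (i j) else u j ν (i j))
        = u ℓ ν (i ℓ) * P := by
      rw [hPdef, ← Finset.mul_prod_erase univ _ (mem_univ ℓ)]
      congr 1
      simp
    have hf' : ∏ j : Fin d, (if (j:ℕ) < (ℓ:ℕ)+1 then w j ν (i j) else u j ν (i j))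
        = w ℓ ν (i ℓ) * P := by
      rw [hPdef, ← Finset.mul_prod_erase univ _ (mem_univ ℓ)]
      congr 1
      · simp
      · refine Finset.prod_congr rfl fun j hj => ?_
        have hne : (j:ℕ) ≠ (ℓ:ℕ) := fun h => Finset.ne_of_mem_erase hj (Fin.ext h)
        by_cases hlt : (j:ℕ) < (ℓ:ℕ)
        · rw [if_pos hlt, if_pos (Nat.lt_succ_of_lt hlt)]
        · rw [if_neg hlt, if_neg (by omega)]
    have huw : u ℓ ν (i ℓ) - w ℓ ν (i ℓ)
        = ∑ k : Fin (min n R), (if r ℓ ≤ (k:ℕ) then σ ℓ k else 0) * (z ℓ k (i ℓ) * v ℓ k ν) := by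
      rw [hSVD, hw, ← Finset.sum_sub_distrib]
      refine Finset.sum_congr rfl fun k _ => ?_
      by_cases h : (k:ℕ) < r ℓ
      · rw [if_pos h, if_neg (by omega)]; ring
      · rw [if_neg h, if_pos (by omega)]; ring
    have hzp : ∀ k : Fin (min n R), ∏ j : Fin d, (if j = ℓ then z ℓ k (i j)
          else if (j:ℕ) < (ℓ:ℕ) then w j ν (i j) else u j ν (i j))
        = z ℓ k (i ℓ) * P := by
      intro k
      rw [hPdef, ← Finset.mul_prod_erase univ _ (mem_univ ℓ)]
      congr 1
      · simp
      · exact Finset.prod_congr rfl fun j hj => by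
          simp [Finset.ne_of_mem_erase hj]
    calc ξ ν * ∏ j : Fin d, (if (j:ℕ) < (ℓ:ℕ) then w j ν (i j) else u j ν (i j))
          - ξ ν * ∏ j : Fin d, (if (j:ℕ) < (ℓ:ℕ)+1 then w j ν (i j) else u j ν (i j))
        = ξ ν * ((u ℓ ν (i ℓ) - w ℓ ν (i ℓ)) * P) := by rw [hf, hf']; ring
      _ = ξ ν * ((∑ k : Fin (min n R), (if r ℓ ≤ (k:ℕ) then σ ℓ k else 0) * (z ℓ k (i ℓ) * v ℓ k ν)) * P) := by
          rw [huw]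
      _ = ∑ k : Fin (min n R), (ξ ν * (if r ℓ ≤ (k:ℕ) then σ ℓ k else 0) * v ℓ k ν) * (z ℓ k (i ℓ) * P) := by
          rw [Finset.sum_mul, Finset.mul_sum]
          exact Finset.sum_congr rfl fun k _ => by ring
      _ = _ := Finset.sum_congr rfl fun k _ => by rw [hzp k]
  clear_value B
  -- the per-mode bound
  have hstep : ∀ ℓ : Fin d, ∑ i, (B ℓ i - B ((ℓ:ℕ)+1) i)^2
      ≤ (∑ ν, ξ ν ^ 2) * (∑ k : Fin (min n R), if r ℓ ≤ (k:ℕ) then (σ ℓ k)^2 else 0) := by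
    intro ℓ
    have hvv1 : ∀ k, ∑ ν, (v ℓ k ν)^2 ≤ 1 := fun k =>
      le_of_eq (by simpa [pow_two] using hv ℓ k k)
    have hg1 : ∀ (ν : Fin R) (j : Fin d),
        ∑ x, ((fun (ν : Fin R) (j : Fin d) (x : Fin n) =>
          if (j:ℕ) < (ℓ:ℕ) then w j ν x else u j ν x) ν j x)^2 ≤ 1 := by
      intro ν j
      by_cases h : (j:ℕ) < (ℓ:ℕ)
      · simp only [if_pos h]; exact hw_sq j ν
      · simp only [if_neg h]; exact le_of_eq (hu_norm j ν)
    have hcore := core ℓ ξ (fun k => if r ℓ ≤ (k:ℕ) then σ ℓ k else 0) (z ℓ) (v ℓ)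
      (fun ν j x => if (j:ℕ) < (ℓ:ℕ) then w j ν x else u j ν x) (hz ℓ) hvv1 hg1
    have hsq : ∀ k : Fin (min n R), (if r ℓ ≤ (k:ℕ) then σ ℓ k else 0)^2
        = (if r ℓ ≤ (k:ℕ) then (σ ℓ k)^2 else 0) := by
      intro k; split_ifs <;> simp
    simp_rw [hsq] at hcore
    calc ∑ i, (B ℓ i - B ((ℓ:ℕ)+1) i)^2
        = ∑ i : Fin d → Fin n,
            (∑ p : Fin R × Fin (min n R),
              (ξ p.1 * (if r ℓ ≤ (p.2:ℕ) then σ ℓ p.2 else 0) * v ℓ p.2 p.1) *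
              ∏ j : Fin d, (if j = ℓ then z ℓ p.2 (i j)
                else if (j:ℕ) < (ℓ:ℕ) then w j p.1 (i j) else u j p.1 (i j)))^2 := by
          exact Finset.sum_congr rfl fun i _ => by rw [hdiff ℓ i]
      _ ≤ _ := hcore
  -- conclusion
  calc Real.sqrt (∑ i, (A i - A0 i)^2)
      = Real.sqrt (∑ i, (∑ ℓ : Fin d, (B ℓ i - B ((ℓ:ℕ)+1) i))^2) := by
        simp_rw [htele]
    _ ≤ ∑ ℓ : Fin d, Real.sqrt (∑ i, (B ℓ i - B ((ℓ:ℕ)+1) i)^2) := by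
        apply sqrt_sum_sq_sum_le
    _ ≤ ∑ ℓ : Fin d, Real.sqrt ((∑ ν, ξ ν ^ 2) *
          (∑ k : Fin (min n R), if r ℓ ≤ (k:ℕ) then (σ ℓ k)^2 else 0)) :=
        Finset.sum_le_sum fun ℓ _ => Real.sqrt_le_sqrt (hstep ℓ)
    _ = Real.sqrt (∑ ν, (ξ ν) ^ 2) *
          ∑ ℓ, Real.sqrt (∑ k : Fin (min n R), if r ℓ ≤ (k : ℕ) then (σ ℓ k) ^ 2 else 0) := by
        rw [Finset.mul_sum]
        exact Finset.sum_congr rfl fun ℓ _ =>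
          Real.sqrt_mul (Finset.sum_nonneg fun ν _ => sq_nonneg _) _
end

section
/- Under the hypotheses of the RHOSVD error bound (A = Σ_{ν=1}^{R} ξ_ν u_ν^{(1)} ⊗ ⋯ ⊗ u_ν^{(d)} with ‖u_ν^{(ℓ)}‖ = 1, singular value decompositions of the side matrices U^{(ℓ)}, and RHOSVD approximation A⁰ obtained by rank-r_ℓ truncation), assume in addition that the canonical decomposition is monotone: ξ_ν ≥ 0 for all ν and every entry of every vector u_ν^{(ℓ)} is nonnegative. Then Σ_{ν=1}^{R} ξ_ν² ≤ ‖A‖², and consequently ‖A − A⁰‖ ≤ ‖A‖ · Σ_{ℓ=1}^{d} ( Σ_{k=r_ℓ+1}^{min(n,R)} σ_{ℓ,k}² )^{1/2}. -/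
open Finset

private lemma sqrt_sum_sq_eq_norm {I : Type*} [Fintype I] (f : I → ℝ) :
    Real.sqrt (∑ i, f i ^ 2) = ‖(WithLp.linearEquiv 2 ℝ (I → ℝ)).symm f‖ := by
  rw [EuclideanSpace.norm_eq]
  congr 1
  refine Finset.sum_congr rfl fun i _ => ?_
  rw [Real.norm_eq_abs, sq_abs]
  rfl

private lemma N_sum_le {I : Type*} [Fintype I] {α : Type*} (s : Finset α) (f : α → I → ℝ) :
    Real.sqrt (∑ i, (∑ m ∈ s, f m i) ^ 2) ≤ ∑ m ∈ s, Real.sqrt (∑ i, f m i ^ 2) := by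
  simp only [sqrt_sum_sq_eq_norm]
  have h : (fun i => ∑ m ∈ s, f m i) = ∑ m ∈ s, f m := by ext i; simp
  rw [h, map_sum]
  exact norm_sum_le _ _

private lemma sum_prod_eq {d n : ℕ} (f : Fin d → Fin n → ℝ) :
    ∑ i : Fin d → Fin n, ∏ ℓ, f ℓ (i ℓ) = ∏ ℓ, ∑ j, f ℓ j := by
  rw [Finset.prod_univ_sum, Fintype.piFinset_univ]

private lemma ortho_inner {m n : ℕ} (z : Fin m → Fin n → ℝ)
    (hz : ∀ k k', ∑ i, z k i * z k' i = if k = k' then (1:ℝ) else 0)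
    (c c' : Fin m → ℝ) :
    ∑ i, (∑ k, c k * z k i) * (∑ k, c' k * z k i) = ∑ k, c k * c' k := by
  simp only [Finset.sum_mul_sum]
  rw [Finset.sum_comm]
  refine Finset.sum_congr rfl fun k _ => ?_
  rw [Finset.sum_comm]
  have h : ∀ k' : Fin m, ∑ i, c k * z k i * (c' k' * z k' i)
      = c k * c' k' * (if k = k' then (1:ℝ) else 0) := by
    intro k'
    rw [← hz k k', Finset.mul_sum]
    exact Finset.sum_congr rfl fun i _ => by ring
  simp only [h, mul_ite, mul_one, mul_zero]
  simp

private lemma prod_sub_prod {d : ℕ} (a b : Fin d → ℝ) (m : Fin d)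
    (h : ∀ ℓ, ℓ ≠ m → a ℓ = b ℓ) :
    ∏ ℓ, a ℓ - ∏ ℓ, b ℓ = (a m - b m) * ∏ ℓ ∈ univ.erase m, a ℓ := by
  rw [← Finset.mul_prod_erase univ a (mem_univ m), ← Finset.mul_prod_erase univ b (mem_univ m),
    show ∏ ℓ ∈ univ.erase m, b ℓ = ∏ ℓ ∈ univ.erase m, a ℓ from
      Finset.prod_congr rfl fun ℓ hℓ => (h ℓ (Finset.ne_of_mem_erase hℓ)).symm]
  ring

/-- **Stability of RHOSVD, part (B)** (Corollary 2.2 (B), Khoromskaia–Khoromskij).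
If the canonical decomposition is monotone (all coefficients `ξ_ν` and all entries of all
skeleton vectors are nonnegative), then `Σ_ν ξ_ν² ≤ ‖A‖²` and consequently
`‖A − A⁰‖ ≤ ‖A‖ · Σ_ℓ (Σ_{k > r_ℓ} σ_{ℓ,k}²)^{1/2}`. -/
theorem rhosvd_stability_monotone
    (d n R : ℕ) (hd : 1 ≤ d) (hn : 1 ≤ n) (hR : 1 ≤ R)
    (ξ : Fin R → ℝ)
    (u : Fin d → Fin R → Fin n → ℝ)
    (hu_norm : ∀ ℓ ν, ∑ i, (u ℓ ν i) ^ 2 = 1)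
    (hξ_nonneg : ∀ ν, 0 ≤ ξ ν)
    (hu_nonneg : ∀ ℓ ν i, 0 ≤ u ℓ ν i)
    (σ : Fin d → Fin (min n R) → ℝ)
    (z : Fin d → Fin (min n R) → Fin n → ℝ)
    (v : Fin d → Fin (min n R) → Fin R → ℝ)
    (hσ : ∀ ℓ k, 0 ≤ σ ℓ k)
    (hz : ∀ ℓ k k', ∑ i, z ℓ k i * z ℓ k' i = if k = k' then (1:ℝ) else 0)
    (hv : ∀ ℓ k k', ∑ ν, v ℓ k ν * v ℓ k' ν = if k = k' then (1:ℝ) else 0)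
    (hSVD : ∀ ℓ ν i, u ℓ ν i = ∑ k, σ ℓ k * z ℓ k i * v ℓ k ν)
    (r : Fin d → ℕ) (hr : ∀ ℓ, r ℓ ≤ min n R)
    (w : Fin d → Fin R → Fin n → ℝ)
    (hw : ∀ ℓ ν i, w ℓ ν i = ∑ k : Fin (min n R), if (k : ℕ) < r ℓ then σ ℓ k * z ℓ k i * v ℓ k ν else 0)
    (A A0 : (Fin d → Fin n) → ℝ)
    (hA : ∀ i, A i = ∑ ν, ξ ν * ∏ ℓ, u ℓ ν (i ℓ))
    (hA0 : ∀ i, A0 i = ∑ ν, ξ ν * ∏ ℓ, w ℓ ν (i ℓ)) :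
    (∑ ν, (ξ ν) ^ 2 ≤ ∑ i, (A i) ^ 2) ∧
    Real.sqrt (∑ i, (A i - A0 i) ^ 2) ≤
      Real.sqrt (∑ i, (A i) ^ 2) *
        ∑ ℓ, Real.sqrt (∑ k : Fin (min n R), if r ℓ ≤ (k : ℕ) then (σ ℓ k) ^ 2 else 0) := by
  -- coefficient representations in the orthonormal system z
  have hu_c : ∀ ℓ ν j, u ℓ ν j = ∑ k : Fin (min n R), (σ ℓ k * v ℓ k ν) * z ℓ k j := by
    intro ℓ ν j
    rw [hSVD]
    exact Finset.sum_congr rfl fun k _ => by ring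
  have hw_c : ∀ ℓ ν j, w ℓ ν j
      = ∑ k : Fin (min n R), (if (k:ℕ) < r ℓ then σ ℓ k * v ℓ k ν else 0) * z ℓ k j := by
    intro ℓ ν j
    rw [hw]
    refine Finset.sum_congr rfl fun k _ => ?_
    split_ifs <;> ring
  have he_c : ∀ ℓ ν j, u ℓ ν j - w ℓ ν j
      = ∑ k : Fin (min n R), (if r ℓ ≤ (k:ℕ) then σ ℓ k * v ℓ k ν else 0) * z ℓ k j := by
    intro ℓ ν j
    rw [hu_c, hw_c, ← Finset.sum_sub_distrib]
    refine Finset.sum_congr rfl fun k _ => ?_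
    by_cases h : (k:ℕ) < r ℓ
    · rw [if_pos h, if_neg (by omega)]; ring
    · rw [if_neg h, if_pos (by omega)]; ring
  -- Parseval-type computation
  have hsq : ∀ (ℓ : Fin d) (c : Fin (min n R) → ℝ) (f : Fin n → ℝ),
      (∀ j, f j = ∑ k : Fin (min n R), c k * z ℓ k j) → ∑ j, f j ^ 2 = ∑ k : Fin (min n R), c k ^ 2 := by
    intro ℓ c f hf
    calc ∑ j, f j ^ 2 = ∑ j, (∑ k : Fin (min n R), c k * z ℓ k j) * (∑ k : Fin (min n R), c k * z ℓ k j) := by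
          refine Finset.sum_congr rfl fun j _ => ?_; rw [hf j, sq]
      _ = ∑ k : Fin (min n R), c k * c k := ortho_inner (z ℓ) (hz ℓ) c c
      _ = ∑ k : Fin (min n R), c k ^ 2 := by simp [sq]
  have hu_sq : ∀ ℓ ν, ∑ k : Fin (min n R), (σ ℓ k * v ℓ k ν) ^ 2 = 1 := fun ℓ ν =>
    (hsq ℓ _ (u ℓ ν) (hu_c ℓ ν)).symm.trans (hu_norm ℓ ν)
  have hw_le1 : ∀ ℓ ν, ∑ j, (w ℓ ν j) ^ 2 ≤ 1 := by
    intro ℓ ν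
    rw [hsq ℓ _ (w ℓ ν) (hw_c ℓ ν)]
    calc ∑ k : Fin (min n R), (if (k:ℕ) < r ℓ then σ ℓ k * v ℓ k ν else 0) ^ 2
        ≤ ∑ k : Fin (min n R), (σ ℓ k * v ℓ k ν) ^ 2 :=
          by
          refine Finset.sum_le_sum fun k _ => ?_
          split_ifs
          · exact le_rfl
          · simpa using sq_nonneg (σ ℓ k * v ℓ k ν)
      _ = 1 := hu_sq ℓ ν
  have he_sq : ∀ ℓ ν, ∑ j, (u ℓ ν j - w ℓ ν j) ^ 2
      = ∑ k : Fin (min n R), if r ℓ ≤ (k:ℕ) then (σ ℓ k * v ℓ k ν) ^ 2 else 0 := by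
    intro ℓ ν
    rw [hsq ℓ _ _ (he_c ℓ ν)]
    exact Finset.sum_congr rfl fun k _ => by split_ifs <;> simp
  have he_tail : ∀ ℓ, ∑ ν, ∑ k : Fin (min n R), (if r ℓ ≤ (k:ℕ) then (σ ℓ k * v ℓ k ν) ^ 2 else 0)
      = ∑ k : Fin (min n R), if r ℓ ≤ (k:ℕ) then (σ ℓ k) ^ 2 else 0 := by
    intro ℓ
    rw [Finset.sum_comm]
    refine Finset.sum_congr rfl fun k _ => ?_
    have hvk : ∑ ν, v ℓ k ν ^ 2 = 1 := by simpa [sq] using hv ℓ k k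
    by_cases h : r ℓ ≤ (k:ℕ)
    · simp only [if_pos h, mul_pow]
      rw [← Finset.mul_sum, hvk, mul_one]
    · simp [if_neg h]
  -- Part 1
  have hA2 : ∑ i, A i ^ 2 = ∑ ν, ∑ μ, ξ ν * ξ μ * ∏ ℓ, (∑ j, u ℓ ν j * u ℓ μ j) := by
    calc ∑ i, A i ^ 2
        = ∑ i : Fin d → Fin n, ∑ ν, ∑ μ, (ξ ν * ∏ ℓ, u ℓ ν (i ℓ)) * (ξ μ * ∏ ℓ, u ℓ μ (i ℓ)) := by
          refine Finset.sum_congr rfl fun i _ => ?_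
          rw [hA, sq, Finset.sum_mul_sum]
      _ = ∑ ν, ∑ μ, ∑ i : Fin d → Fin n, (ξ ν * ∏ ℓ, u ℓ ν (i ℓ)) * (ξ μ * ∏ ℓ, u ℓ μ (i ℓ)) := by
          rw [Finset.sum_comm]
          exact Finset.sum_congr rfl fun ν _ => Finset.sum_comm
      _ = ∑ ν, ∑ μ, ξ ν * ξ μ * ∏ ℓ, (∑ j, u ℓ ν j * u ℓ μ j) := by
          refine Finset.sum_congr rfl fun ν _ => Finset.sum_congr rfl fun μ _ => ?_
          have h1 : ∀ i : Fin d → Fin n,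
              (ξ ν * ∏ ℓ, u ℓ ν (i ℓ)) * (ξ μ * ∏ ℓ, u ℓ μ (i ℓ))
              = ξ ν * ξ μ * ∏ ℓ, (u ℓ ν (i ℓ) * u ℓ μ (i ℓ)) := fun i => by
            rw [Finset.prod_mul_distrib]; ring
          rw [Finset.sum_congr rfl (fun i _ => h1 i), ← Finset.mul_sum,
            sum_prod_eq (fun ℓ j => u ℓ ν j * u ℓ μ j)]
  have part1 : ∑ ν, ξ ν ^ 2 ≤ ∑ i, A i ^ 2 := by
    rw [hA2]
    refine Finset.sum_le_sum fun ν _ => ?_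
    have hterm : ξ ν ^ 2 = ξ ν * ξ ν * ∏ ℓ : Fin d, (∑ j, u ℓ ν j * u ℓ ν j) := by
      have h1 : ∀ ℓ : Fin d, ∑ j, u ℓ ν j * u ℓ ν j = 1 := fun ℓ => by
        simpa [sq] using hu_norm ℓ ν
      simp [h1, sq]
    rw [hterm]
    refine Finset.single_le_sum (f := fun μ => ξ ν * ξ μ * ∏ ℓ : Fin d, (∑ j, u ℓ ν j * u ℓ μ j)) (fun μ _ => ?_) (mem_univ ν)
    exact mul_nonneg (mul_nonneg (hξ_nonneg ν) (hξ_nonneg μ))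
      (Finset.prod_nonneg fun ℓ _ => Finset.sum_nonneg fun j _ =>
        mul_nonneg (hu_nonneg _ _ _) (hu_nonneg _ _ _))
  -- Part 2 : telescoping
  set g : ℕ → (Fin d → Fin n) → ℝ :=
    fun m i => ∑ ν, ξ ν * ∏ ℓ : Fin d, (if (ℓ:ℕ) < m then w ℓ ν (i ℓ) else u ℓ ν (i ℓ)) with hg
  have hg0 : ∀ i, g 0 i = A i := by intro i; rw [hA]; simp [hg]
  have hgd : ∀ i, g d i = A0 i := by intro i; rw [hA0]; simp [hg, Fin.is_lt]
  have htel : ∀ i, A i - A0 i = ∑ m ∈ range d, (g m i - g (m+1) i) := by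
    intro i
    rw [Finset.sum_range_sub' (fun m => g m i) d, hg0 i, hgd i]
  have hdiff : ∀ (m : Fin d) (i : Fin d → Fin n),
      g (m:ℕ) i - g ((m:ℕ)+1) i
      = ∑ ν, ξ ν * ((u m ν (i m) - w m ν (i m)) *
          ∏ ℓ ∈ univ.erase m, (if (ℓ:ℕ) < (m:ℕ) then w ℓ ν (i ℓ) else u ℓ ν (i ℓ))) := by
    intro m i
    simp only [hg]
    rw [← Finset.sum_sub_distrib]
    refine Finset.sum_congr rfl fun ν _ => ?_
    rw [← mul_sub]
    congr 1
    have hps := prod_sub_prod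
      (fun ℓ => if (ℓ:ℕ) < (m:ℕ) then w ℓ ν (i ℓ) else u ℓ ν (i ℓ))
      (fun ℓ => if (ℓ:ℕ) < (m:ℕ)+1 then w ℓ ν (i ℓ) else u ℓ ν (i ℓ)) m
      (fun ℓ hℓ => by
        have hne : (ℓ:ℕ) ≠ (m:ℕ) := fun h => hℓ (Fin.ext h)
        show (if (ℓ:ℕ) < (m:ℕ) then w ℓ ν (i ℓ) else u ℓ ν (i ℓ))
            = (if (ℓ:ℕ) < (m:ℕ)+1 then w ℓ ν (i ℓ) else u ℓ ν (i ℓ))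
        by_cases h' : (ℓ:ℕ) < (m:ℕ)
        · rw [if_pos h', if_pos (by omega)]
        · rw [if_neg h', if_neg (by omega)])
    rw [hps]
    simp [Nat.lt_succ_self]
  -- per-mode error bound
  have hEm : ∀ m : Fin d,
      Real.sqrt (∑ i, (g (m:ℕ) i - g ((m:ℕ)+1) i) ^ 2)
      ≤ Real.sqrt (∑ ν, ξ ν ^ 2) *
          Real.sqrt (∑ k : Fin (min n R), if r m ≤ (k:ℕ) then (σ m k) ^ 2 else 0) := by
    intro m
    set F : Fin R → (Fin d → Fin n) → ℝ := fun ν i =>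
      ξ ν * ((u m ν (i m) - w m ν (i m)) *
        ∏ ℓ ∈ univ.erase m, (if (ℓ:ℕ) < (m:ℕ) then w ℓ ν (i ℓ) else u ℓ ν (i ℓ))) with hF
    have hE : ∀ ν, (0:ℝ) ≤ ∑ k : Fin (min n R), if r m ≤ (k:ℕ) then (σ m k * v m k ν) ^ 2 else 0 :=
      fun ν => Finset.sum_nonneg fun k _ => by positivity
    have step1 : Real.sqrt (∑ i, (g (m:ℕ) i - g ((m:ℕ)+1) i) ^ 2)
        ≤ ∑ ν, Real.sqrt (∑ i, F ν i ^ 2) := by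
      have h1 : ∀ i, g (m:ℕ) i - g ((m:ℕ)+1) i = ∑ ν, F ν i := fun i => hdiff m i
      calc Real.sqrt (∑ i, (g (m:ℕ) i - g ((m:ℕ)+1) i) ^ 2)
          = Real.sqrt (∑ i, (∑ ν, F ν i) ^ 2) := by
            congr 1; exact Finset.sum_congr rfl fun i _ => by rw [h1 i]
        _ ≤ _ := N_sum_le univ F
    have step2 : ∀ ν, Real.sqrt (∑ i, F ν i ^ 2)
        ≤ ξ ν * Real.sqrt (∑ k : Fin (min n R), if r m ≤ (k:ℕ) then (σ m k * v m k ν) ^ 2 else 0) := by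
      intro ν
      set H : Fin d → Fin n → ℝ := fun ℓ j =>
        if ℓ = m then u m ν j - w m ν j
        else (if (ℓ:ℕ) < (m:ℕ) then w ℓ ν j else u ℓ ν j) with hH
      have hFν : ∀ i, F ν i = ξ ν * ∏ ℓ, H ℓ (i ℓ) := by
        intro i
        simp only [hF]
        congr 1
        rw [← Finset.mul_prod_erase univ (fun ℓ => H ℓ (i ℓ)) (mem_univ m)]
        congr 1
        · simp [hH]
        · exact Finset.prod_congr rfl fun ℓ hℓ => by
            simp only [hH]; rw [if_neg (Finset.ne_of_mem_erase hℓ)]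
      have hsum : ∑ i, F ν i ^ 2 = ξ ν ^ 2 * ∏ ℓ, ∑ j, H ℓ j ^ 2 := by
        simp only [hFν, mul_pow]
        rw [← Finset.mul_sum]
        congr 1
        rw [← sum_prod_eq (fun ℓ j => H ℓ j ^ 2)]
        exact Finset.sum_congr rfl fun i _ => (Finset.prod_pow _ _ _).symm
      have hHm : ∑ j, H m j ^ 2 = ∑ k : Fin (min n R), if r m ≤ (k:ℕ) then (σ m k * v m k ν) ^ 2 else 0 := by
        have : ∀ j, H m j = u m ν j - w m ν j := fun j => by simp [hH]
        rw [Finset.sum_congr rfl fun j _ => by rw [this j]]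
        exact he_sq m ν
      have hprod_le : ∏ ℓ, ∑ j, H ℓ j ^ 2
          ≤ ∑ k : Fin (min n R), if r m ≤ (k:ℕ) then (σ m k * v m k ν) ^ 2 else 0 := by
        rw [← Finset.mul_prod_erase univ (fun ℓ => ∑ j, H ℓ j ^ 2) (mem_univ m), hHm]
        have herase : ∏ ℓ ∈ univ.erase m, ∑ j, H ℓ j ^ 2 ≤ 1 := by
          refine Finset.prod_le_one (fun ℓ _ => Finset.sum_nonneg fun j _ => sq_nonneg _)
            (fun ℓ hℓ => ?_)
          have hne : ℓ ≠ m := Finset.ne_of_mem_erase hℓ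
          have hHℓ : ∀ j, H ℓ j = if (ℓ:ℕ) < (m:ℕ) then w ℓ ν j else u ℓ ν j := fun j => by
            simp only [hH]; rw [if_neg hne]
          rw [Finset.sum_congr rfl fun j _ => by rw [hHℓ j]]
          by_cases h' : (ℓ:ℕ) < (m:ℕ)
          · simp only [if_pos h']; exact hw_le1 ℓ ν
          · simp only [if_neg h']; exact le_of_eq (hu_norm ℓ ν)
        calc (∑ k : Fin (min n R), if r m ≤ (k:ℕ) then (σ m k * v m k ν) ^ 2 else 0) *
              ∏ ℓ ∈ univ.erase m, ∑ j, H ℓ j ^ 2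
            ≤ (∑ k : Fin (min n R), if r m ≤ (k:ℕ) then (σ m k * v m k ν) ^ 2 else 0) * 1 :=
              mul_le_mul_of_nonneg_left herase (hE ν)
          _ = _ := mul_one _
      calc Real.sqrt (∑ i, F ν i ^ 2)
          = Real.sqrt (ξ ν ^ 2 * ∏ ℓ, ∑ j, H ℓ j ^ 2) := by rw [hsum]
        _ ≤ Real.sqrt (ξ ν ^ 2 * ∑ k : Fin (min n R), if r m ≤ (k:ℕ) then (σ m k * v m k ν) ^ 2 else 0) :=
            Real.sqrt_le_sqrt (mul_le_mul_of_nonneg_left hprod_le (sq_nonneg _))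
        _ = ξ ν * Real.sqrt (∑ k : Fin (min n R), if r m ≤ (k:ℕ) then (σ m k * v m k ν) ^ 2 else 0) := by
            rw [Real.sqrt_mul (sq_nonneg _), Real.sqrt_sq (hξ_nonneg ν)]
    have step3 : ∑ ν, ξ ν * Real.sqrt (∑ k : Fin (min n R), if r m ≤ (k:ℕ) then (σ m k * v m k ν) ^ 2 else 0)
        ≤ Real.sqrt (∑ ν, ξ ν ^ 2) *
            Real.sqrt (∑ k : Fin (min n R), if r m ≤ (k:ℕ) then (σ m k) ^ 2 else 0) := by
      have cs := Real.sum_mul_le_sqrt_mul_sqrt univ (fun ν => ξ ν)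
        (fun ν => Real.sqrt (∑ k : Fin (min n R), if r m ≤ (k:ℕ) then (σ m k * v m k ν) ^ 2 else 0))
      have hsq' : ∑ ν, Real.sqrt (∑ k : Fin (min n R), if r m ≤ (k:ℕ) then (σ m k * v m k ν) ^ 2 else 0) ^ 2
          = ∑ k : Fin (min n R), if r m ≤ (k:ℕ) then (σ m k) ^ 2 else 0 := by
        rw [← he_tail m]
        exact Finset.sum_congr rfl fun ν _ => Real.sq_sqrt (hE ν)
      rwa [hsq'] at cs
    calc Real.sqrt (∑ i, (g (m:ℕ) i - g ((m:ℕ)+1) i) ^ 2)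
        ≤ ∑ ν, Real.sqrt (∑ i, F ν i ^ 2) := step1
      _ ≤ ∑ ν, ξ ν * Real.sqrt (∑ k : Fin (min n R), if r m ≤ (k:ℕ) then (σ m k * v m k ν) ^ 2 else 0) :=
          Finset.sum_le_sum fun ν _ => step2 ν
      _ ≤ _ := step3
  -- assembly
  refine ⟨part1, ?_⟩
  calc Real.sqrt (∑ i, (A i - A0 i) ^ 2)
      = Real.sqrt (∑ i, (∑ m ∈ range d, (g m i - g (m+1) i)) ^ 2) := by
        congr 1; exact Finset.sum_congr rfl fun i _ => by rw [htel i]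
    _ ≤ ∑ m ∈ range d, Real.sqrt (∑ i, (g m i - g (m+1) i) ^ 2) :=
        N_sum_le (range d) (fun m i => g m i - g (m+1) i)
    _ = ∑ ℓ : Fin d, Real.sqrt (∑ i, (g (ℓ:ℕ) i - g ((ℓ:ℕ)+1) i) ^ 2) :=
        (Fin.sum_univ_eq_sum_range (fun m => Real.sqrt (∑ i, (g m i - g (m+1) i) ^ 2)) d).symm
    _ ≤ ∑ ℓ : Fin d, Real.sqrt (∑ ν, ξ ν ^ 2) *
          Real.sqrt (∑ k : Fin (min n R), if r ℓ ≤ (k:ℕ) then (σ ℓ k) ^ 2 else 0) :=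
        Finset.sum_le_sum fun ℓ _ => hEm ℓ
    _ = Real.sqrt (∑ ν, ξ ν ^ 2) *
          ∑ ℓ, Real.sqrt (∑ k : Fin (min n R), if r ℓ ≤ (k:ℕ) then (σ ℓ k) ^ 2 else 0) :=
        (Finset.mul_sum _ _ _).symm
    _ ≤ Real.sqrt (∑ i, A i ^ 2) *
          ∑ ℓ, Real.sqrt (∑ k : Fin (min n R), if r ℓ ≤ (k:ℕ) then (σ ℓ k) ^ 2 else 0) :=
        mul_le_mul_of_nonneg_right (Real.sqrt_le_sqrt part1)
          (Finset.sum_nonneg fun ℓ _ => Real.sqrt_nonneg _)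
end

section
/- Let A = β ×₁ V^{(1)} ×₂ ⋯ ×_d V^{(d)} be an order-d tensor of size n₁×⋯×n_d in Tucker format, with core β ∈ ℝ^{r₁×⋯×r_d} and side matrices V^{(ℓ)} ∈ ℝ^{n_ℓ×r_ℓ} having orthonormal columns, and let R ≥ 1. If β_{(R)} ∈ ℝ^{r₁×⋯×r_d} is a tensor of canonical rank at most R minimizing ‖β − μ‖ over all rank-≤R tensors μ ∈ ℝ^{r₁×⋯×r_d}, then A_{(R)} := β_{(R)} ×₁ V^{(1)} ⋯ ×_d V^{(d)} has canonical rank at most R, satisfies ‖A − A_{(R)}‖ = ‖β − β_{(R)}‖, and minimizes ‖A − Z‖ over all order-d tensors Z of size n₁×⋯×n_d of canonical rank at most R. -/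
open Finset

/-- A tensor admits a rank-`R` canonical representation (canonical rank at most `R`)
if it is a sum of `R` weighted elementary (rank-one) tensors. -/
def HasCanRank {d : ℕ} {n : Fin d → ℕ} (R : ℕ) (Z : (∀ ℓ, Fin (n ℓ)) → ℝ) : Prop :=
  ∃ (lam : Fin R → ℝ) (y : ∀ ℓ : Fin d, Fin R → Fin (n ℓ) → ℝ),
    ∀ i, Z i = ∑ ν, lam ν * ∏ ℓ, y ℓ ν (i ℓ)

/-- The Frobenius norm of a tensor. -/
noncomputable def frob {d : ℕ} {n : Fin d → ℕ} (A : (∀ ℓ, Fin (n ℓ)) → ℝ) : ℝ :=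
  Real.sqrt (∑ i, (A i) ^ 2)

lemma sum_prod_pi {d : ℕ} {n : Fin d → ℕ} (f : ∀ ℓ, Fin (n ℓ) → ℝ) :
    ∑ i : (∀ ℓ, Fin (n ℓ)), ∏ ℓ, f ℓ (i ℓ) = ∏ ℓ, ∑ j, f ℓ j :=
  (Fintype.prod_sum f).symm

lemma tucker_rank {d : ℕ} {n r : Fin d → ℕ}
    (W : ∀ ℓ, Fin (n ℓ) → Fin (r ℓ) → ℝ) (μ : (∀ ℓ, Fin (r ℓ)) → ℝ) (R : ℕ)
    (h : ∃ (lam : Fin R → ℝ) (y : ∀ ℓ : Fin d, Fin R → Fin (r ℓ) → ℝ),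
      ∀ k, μ k = ∑ ν, lam ν * ∏ ℓ, y ℓ ν (k ℓ)) :
    ∃ (lam : Fin R → ℝ) (z : ∀ ℓ : Fin d, Fin R → Fin (n ℓ) → ℝ),
      ∀ i : (∀ ℓ, Fin (n ℓ)), (∑ k : (∀ ℓ, Fin (r ℓ)), μ k * ∏ ℓ, W ℓ (i ℓ) (k ℓ))
        = ∑ ν, lam ν * ∏ ℓ, z ℓ ν (i ℓ) := by
  obtain ⟨lam, y, hy⟩ := h
  refine ⟨lam, fun ℓ ν i => ∑ j, y ℓ ν j * W ℓ i j, fun i => ?_⟩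
  simp_rw [hy, Finset.sum_mul, ← sum_prod_pi (fun ℓ j => y ℓ (_ : Fin R) j * W ℓ (i ℓ) j)]
  rw [Finset.sum_comm]
  congr 1
  ext k
  rw [Finset.mul_sum]
  congr 1
  ext ν
  rw [mul_assoc, Finset.prod_mul_distrib]

lemma tucker_inner {d : ℕ} {n r : Fin d → ℕ}
    (V : ∀ ℓ, Fin (n ℓ) → Fin (r ℓ) → ℝ)
    (hV : ∀ ℓ k k', ∑ i, V ℓ i k * V ℓ i k' = if k = k' then (1:ℝ) else 0)
    (μ ν : (∀ ℓ, Fin (r ℓ)) → ℝ) :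
    ∑ i : (∀ ℓ, Fin (n ℓ)),
      (∑ k : (∀ ℓ, Fin (r ℓ)), μ k * ∏ ℓ, V ℓ (i ℓ) (k ℓ)) *
      (∑ k : (∀ ℓ, Fin (r ℓ)), ν k * ∏ ℓ, V ℓ (i ℓ) (k ℓ)) = ∑ k, μ k * ν k := by
  have key : ∀ k k' : (∀ ℓ, Fin (r ℓ)),
      (∑ i : (∀ ℓ, Fin (n ℓ)), (∏ ℓ, V ℓ (i ℓ) (k ℓ)) * ∏ ℓ, V ℓ (i ℓ) (k' ℓ))
        = if k = k' then (1:ℝ) else 0 := by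
    intro k k'
    simp_rw [← Finset.prod_mul_distrib]
    rw [sum_prod_pi (fun ℓ j => V ℓ j (k ℓ) * V ℓ j (k' ℓ))]
    simp_rw [hV]
    by_cases h : k = k'
    · subst h; simp
    · rw [if_neg h]
      obtain ⟨ℓ, hℓ⟩ := Function.ne_iff.mp h
      exact Finset.prod_eq_zero (Finset.mem_univ ℓ) (if_neg hℓ)
  simp_rw [Finset.sum_mul_sum]
  rw [Finset.sum_comm]
  refine Finset.sum_congr rfl fun k _ => ?_
  rw [Finset.sum_comm]
  have h2 : ∀ k' : (∀ ℓ, Fin (r ℓ)),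
      (∑ i : (∀ ℓ, Fin (n ℓ)), (μ k * ∏ ℓ, V ℓ (i ℓ) (k ℓ)) * (ν k' * ∏ ℓ, V ℓ (i ℓ) (k' ℓ)))
        = if k = k' then μ k * ν k' else 0 := by
    intro k'
    have : (∑ i : (∀ ℓ, Fin (n ℓ)), (μ k * ∏ ℓ, V ℓ (i ℓ) (k ℓ)) * (ν k' * ∏ ℓ, V ℓ (i ℓ) (k' ℓ)))
        = μ k * ν k' * ∑ i : (∀ ℓ, Fin (n ℓ)), (∏ ℓ, V ℓ (i ℓ) (k ℓ)) * ∏ ℓ, V ℓ (i ℓ) (k' ℓ) := by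
      rw [Finset.mul_sum]; exact Finset.sum_congr rfl fun i _ => by ring
    rw [this, key k k', mul_ite, mul_one, mul_zero]
  simp_rw [h2]
  simp

/-- **Mixed Tucker-to-canonical approximation, part (B)** (Lemma 2.4 (B),
Khoromskaia–Khoromskij). If `β_{(R)}` is a best rank-`R` canonical approximation of the
Tucker core `β`, then `A_{(R)} = β_{(R)} ×₁ V^{(1)} ⋯ ×_d V^{(d)}` has canonical rank at
most `R`, satisfies `‖A − A_{(R)}‖ = ‖β − β_{(R)}‖`, and is a best rank-`R` canonical
approximation of `A = β ×₁ V^{(1)} ⋯ ×_d V^{(d)}`. -/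
theorem tucker_to_canonical_best_approx (d : ℕ) (n r : Fin d → ℕ)
    (β : (∀ ℓ, Fin (r ℓ)) → ℝ)
    (V : ∀ ℓ, Fin (n ℓ) → Fin (r ℓ) → ℝ)
    (hV : ∀ ℓ k k', ∑ i, V ℓ i k * V ℓ i k' = if k = k' then (1:ℝ) else 0)
    (A : (∀ ℓ, Fin (n ℓ)) → ℝ)
    (hA : ∀ i, A i = ∑ k : (∀ ℓ, Fin (r ℓ)), β k * ∏ ℓ, V ℓ (i ℓ) (k ℓ))
    (R : ℕ) (hR : 1 ≤ R)
    (βR : (∀ ℓ, Fin (r ℓ)) → ℝ)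
    (hβR_rank : HasCanRank R βR)
    (hβR_best : ∀ μ : (∀ ℓ, Fin (r ℓ)) → ℝ, HasCanRank R μ →
      frob (fun k => β k - βR k) ≤ frob (fun k => β k - μ k))
    (AR : (∀ ℓ, Fin (n ℓ)) → ℝ)
    (hAR : ∀ i, AR i = ∑ k : (∀ ℓ, Fin (r ℓ)), βR k * ∏ ℓ, V ℓ (i ℓ) (k ℓ)) :
    HasCanRank R AR ∧
    frob (fun i => A i - AR i) = frob (fun k => β k - βR k) ∧
    ∀ Z : (∀ ℓ, Fin (n ℓ)) → ℝ, HasCanRank R Z →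
      frob (fun i => A i - AR i) ≤ frob (fun i => A i - Z i) := by
  -- the Tucker map
  set Tm : ((∀ ℓ, Fin (r ℓ)) → ℝ) → (∀ ℓ, Fin (n ℓ)) → ℝ :=
    fun μ i => ∑ k : (∀ ℓ, Fin (r ℓ)), μ k * ∏ ℓ, V ℓ (i ℓ) (k ℓ) with hTm
  -- isometry on differences
  have hATm : ∀ μ : (∀ ℓ, Fin (r ℓ)) → ℝ, ∀ i, A i - Tm μ i
      = ∑ k : (∀ ℓ, Fin (r ℓ)), (β k - μ k) * ∏ ℓ, V ℓ (i ℓ) (k ℓ) := by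
    intro μ i
    rw [hA, hTm, ← Finset.sum_sub_distrib]
    exact Finset.sum_congr rfl fun k _ => (sub_mul _ _ _).symm
  have hiso : ∀ μ : (∀ ℓ, Fin (r ℓ)) → ℝ,
      frob (fun i => A i - Tm μ i) = frob (fun k => β k - μ k) := by
    intro μ
    unfold frob
    congr 1
    simp_rw [hATm μ, sq]
    exact tucker_inner V hV (fun k => β k - μ k) (fun k => β k - μ k)
  have hARTm : AR = Tm βR := funext fun i => hAR i
  refine ⟨?_, ?_, ?_⟩
  · obtain ⟨lam, z, hz⟩ := tucker_rank V βR R hβR_rank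
    exact ⟨lam, z, fun i => by rw [hAR i]; exact hz i⟩
  · rw [hARTm]; exact hiso βR
  · rintro Z ⟨lam, y, hy⟩
    set μ : (∀ ℓ, Fin (r ℓ)) → ℝ :=
      fun k => ∑ i : (∀ ℓ, Fin (n ℓ)), Z i * ∏ ℓ, V ℓ (i ℓ) (k ℓ) with hμ
    have hμrank : HasCanRank R μ := by
      obtain ⟨lam', z, hz⟩ :=
        tucker_rank (n := r) (r := n) (fun ℓ k i => V ℓ i k) Z R ⟨lam, y, hy⟩
      exact ⟨lam', z, fun k => hz k⟩
    -- ⟨Tν, Z⟩ = ⟨ν, μ⟩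
    have hTZ : ∀ ν : (∀ ℓ, Fin (r ℓ)) → ℝ,
        (∑ i : (∀ ℓ, Fin (n ℓ)), Tm ν i * Z i) = ∑ k, ν k * μ k := by
      intro ν
      simp_rw [hTm, Finset.sum_mul]
      rw [Finset.sum_comm]
      refine Finset.sum_congr rfl fun k _ => ?_
      rw [hμ, Finset.mul_sum]
      exact Finset.sum_congr rfl fun i _ => by ring
    have hc : ∑ i : (∀ ℓ, Fin (n ℓ)), (A i - Tm μ i) * (Tm μ i - Z i) = 0 := by
      have : ∀ i, (A i - Tm μ i) * (Tm μ i - Z i)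
          = Tm (fun k => β k - μ k) i * Tm μ i - Tm (fun k => β k - μ k) i * Z i := by
        intro i
        rw [show Tm (fun k => β k - μ k) i = A i - Tm μ i from (hATm μ i).symm]
        ring
      simp_rw [this]
      rw [Finset.sum_sub_distrib, hTZ (fun k => β k - μ k),
        show (∑ i : (∀ ℓ, Fin (n ℓ)), Tm (fun k => β k - μ k) i * Tm μ i)
          = ∑ k, (β k - μ k) * μ k from tucker_inner V hV _ _, sub_self]
    have hpy : ∑ i : (∀ ℓ, Fin (n ℓ)), (A i - Tm μ i) ^ 2 ≤
        ∑ i : (∀ ℓ, Fin (n ℓ)), (A i - Z i) ^ 2 := by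
      have hexp : ∀ i, (A i - Z i) ^ 2 = (A i - Tm μ i) ^ 2 + (Tm μ i - Z i) ^ 2
          + 2 * ((A i - Tm μ i) * (Tm μ i - Z i)) := fun i => by ring
      calc ∑ i : (∀ ℓ, Fin (n ℓ)), (A i - Tm μ i) ^ 2
          ≤ (∑ i : (∀ ℓ, Fin (n ℓ)), (A i - Tm μ i) ^ 2)
            + ∑ i : (∀ ℓ, Fin (n ℓ)), (Tm μ i - Z i) ^ 2 :=
            le_add_of_nonneg_right (Finset.sum_nonneg fun i _ => sq_nonneg _)
        _ = ∑ i : (∀ ℓ, Fin (n ℓ)), (A i - Z i) ^ 2 := by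
            simp_rw [hexp]
            rw [Finset.sum_add_distrib, Finset.sum_add_distrib, ← Finset.mul_sum, hc,
              mul_zero, add_zero]
    calc frob (fun i => A i - AR i) = frob (fun k => β k - βR k) := by
          rw [hARTm]; exact hiso βR
      _ ≤ frob (fun k => β k - μ k) := hβR_best μ hμrank
      _ = frob (fun i => A i - Tm μ i) := (hiso μ).symm
      _ ≤ frob (fun i => A i - Z i) := Real.sqrt_le_sqrt hpy
end

section
/- For all real α > 0 and ρ > 0, the Slater function admits the Laplace transform representation e^{−2√(αρ)} = (√α/√π) ∫₀^∞ τ^{−3/2} e^{−α/τ − ρτ} dτ. -/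
/-!
Substituting `τ = α / s²` and writing `c = √(αρ)`, one has `α/τ + ρτ = (s - c/s)² + 2c`, so the
integral becomes `(2 / √α) e^{-2c} ∫₀^∞ e^{-(s - c/s)²} ds`. The last integral equals `√π / 2`
(Cauchy–Schlömilch): `u = s - c/s` maps `(0, ∞)` bijectively onto `ℝ`, whence
`∫₀^∞ (1 + c/s²) e^{-(s - c/s)²} ds = ∫ e^{-u²} du = √π`, while the inversion `s ↦ c/s` fixes
`e^{-(s - c/s)²}` and turns `ds` into `c/s² ds`, so the two halves of that integral are equal.
-/

open MeasureTheory Real Set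

variable {E : Type*} [NormedAddCommGroup E] [NormedSpace ℝ E]

section ConstDivPow

variable {a : ℝ} {n : ℕ}

lemma hasDerivAt_const_div_pow (a : ℝ) (n : ℕ) {s : ℝ} (hs : s ≠ 0) :
    HasDerivAt (fun s => a / s ^ n) (-(n * a / s ^ (n + 1))) s := by
  refine ((hasDerivAt_const s a).fun_div (hasDerivAt_pow n s) (pow_ne_zero n hs)).congr_deriv ?_
  rcases n with _ | n
  · simp
  · rw [Nat.add_sub_cancel]
    field_simp
    ring

lemma injOn_const_div_pow_Ioi (ha : a ≠ 0) (hn : n ≠ 0) :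
    InjOn (fun s : ℝ => a / s ^ n) (Ioi 0) := fun s hs t ht h =>
  (pow_left_inj₀ (le_of_lt hs) (le_of_lt ht) hn).1 (by simpa [div_eq_mul_inv, ha] using h)

lemma image_const_div_pow_Ioi (ha : 0 < a) (hn : n ≠ 0) :
    (fun s : ℝ => a / s ^ n) '' Ioi 0 = Ioi 0 := by
  refine Subset.antisymm (image_subset_iff.2 fun s hs => div_pos ha (pow_pos hs n))
    fun t (ht : 0 < t) => ⟨(a / t) ^ (n⁻¹ : ℝ), rpow_pos_of_pos (div_pos ha ht) _, ?_⟩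
  dsimp only
  rw [rpow_inv_natCast_pow (div_pos ha ht).le hn]
  field_simp

theorem integral_comp_const_div_pow_Ioi (ha : 0 < a) (hn : n ≠ 0) (g : ℝ → E) :
    ∫ s in Ioi 0, (n * a / s ^ (n + 1)) • g (a / s ^ n) = ∫ t in Ioi 0, g t := by
  have h := integral_image_eq_integral_abs_deriv_smul measurableSet_Ioi
    (fun s (hs : 0 < s) => (hasDerivAt_const_div_pow a n hs.ne').hasDerivWithinAt)
    (injOn_const_div_pow_Ioi ha.ne' hn) g
  rw [image_const_div_pow_Ioi ha hn] at h
  rw [h]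
  refine setIntegral_congr_fun measurableSet_Ioi fun s (hs : 0 < s) => ?_
  rw [abs_neg, abs_of_pos (by positivity)]

theorem integrableOn_comp_const_div_pow_Ioi_iff (ha : 0 < a) (hn : n ≠ 0) (g : ℝ → E) :
    IntegrableOn (fun s => (n * a / s ^ (n + 1)) • g (a / s ^ n)) (Ioi 0) ↔
      IntegrableOn g (Ioi 0) := by
  have h := integrableOn_image_iff_integrableOn_abs_deriv_smul measurableSet_Ioi
    (fun s (hs : 0 < s) => (hasDerivAt_const_div_pow a n hs.ne').hasDerivWithinAt)
    (injOn_const_div_pow_Ioi ha.ne' hn) g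
  rw [image_const_div_pow_Ioi ha hn] at h
  rw [h]
  refine integrableOn_congr_fun (fun s (hs : 0 < s) => ?_) measurableSet_Ioi
  rw [abs_neg, abs_of_pos (by positivity)]

end ConstDivPow

section SubDiv

variable {c : ℝ}

lemma injOn_sub_div_Ioi (hc : 0 ≤ c) : InjOn (fun x : ℝ => x - c / x) (Ioi 0) := by
  intro x (hx : 0 < x) y (hy : 0 < y) h
  have key : (x - y) * (x * y + c) = 0 := by
    field_simp at h
    linear_combination h
  have : x * y + c ≠ 0 := by positivity
  exact sub_eq_zero.1 ((mul_eq_zero.1 key).resolve_right this)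

lemma image_sub_div_Ioi (hc : 0 < c) : (fun x : ℝ => x - c / x) '' Ioi 0 = univ := by
  refine eq_univ_of_forall fun u => ?_
  -- the positive root of `x² - u x - c = 0`
  set r := √(u ^ 2 + 4 * c)
  have hr : r ^ 2 = u ^ 2 + 4 * c := sq_sqrt (by positivity)
  have hur : |u| < r := by
    rw [← sqrt_sq_eq_abs]
    exact sqrt_lt_sqrt (sq_nonneg u) (by linarith)
  have hx : 0 < (u + r) / 2 := by linarith [neg_abs_le u]
  have hne : u + r ≠ 0 := by linarith
  refine ⟨(u + r) / 2, hx, ?_⟩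
  field_simp
  linear_combination hr

theorem integral_comp_sub_div_Ioi (hc : 0 < c) (g : ℝ → E) :
    ∫ x in Ioi 0, (1 + c / x ^ 2) • g (x - c / x) = ∫ u, g u := by
  have hderiv : ∀ x ∈ Ioi (0 : ℝ),
      HasDerivWithinAt (fun x => x - c / x) (1 + c / x ^ 2) (Ioi 0) x := by
    intro x (hx : 0 < x)
    have := (hasDerivAt_id x).sub (hasDerivAt_const_div_pow c 1 hx.ne')
    simp only [pow_one, Nat.cast_one, one_mul, sub_neg_eq_add] at this
    exact this.hasDerivWithinAt
  have h := integral_image_eq_integral_abs_deriv_smul measurableSet_Ioi hderiv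
    (injOn_sub_div_Ioi hc.le) g
  rw [image_sub_div_Ioi hc, setIntegral_univ] at h
  rw [h]
  refine setIntegral_congr_fun measurableSet_Ioi fun x (hx : 0 < x) => ?_
  rw [abs_of_pos (by positivity)]

end SubDiv

section Glasser

variable {c : ℝ}

lemma integrableOn_exp_neg_sq_sub_div_Ioi (c : ℝ) :
    IntegrableOn (fun x => exp (-(x - c / x) ^ 2)) (Ioi 0) := by
  have hcont : ContinuousOn (fun x : ℝ => exp (-(x - c / x) ^ 2)) (Ioi 0) :=
    ((continuousOn_id.sub (continuousOn_const.div continuousOn_id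
      fun x (hx : 0 < x) => hx.ne')).pow 2).neg.rexp
  refine ((integrable_exp_neg_mul_sq one_pos).const_mul (exp (2 * c))).integrableOn.mono'
    (hcont.aestronglyMeasurable measurableSet_Ioi) ?_
  filter_upwards [ae_restrict_mem measurableSet_Ioi] with x (hx : 0 < x)
  rw [norm_of_nonneg (exp_pos _).le, ← exp_add, exp_le_exp]
  have : (x - c / x) ^ 2 = x ^ 2 - 2 * c + (c / x) ^ 2 := by field_simp; ring
  nlinarith [sq_nonneg (c / x)]

theorem integral_exp_neg_sq_sub_div_Ioi (hc : 0 < c) :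
    ∫ x in Ioi 0, exp (-(x - c / x) ^ 2) = √π / 2 := by
  set e := fun x : ℝ => exp (-(x - c / x) ^ 2)
  have he_inv : EqOn (fun x => (c / x ^ 2) • e (c / x)) (fun x => c / x ^ 2 * e x) (Ioi 0) := by
    intro x (hx : 0 < x)
    simp only [e, smul_eq_mul]
    congr 3
    field_simp
    ring
  have hinv := integral_comp_const_div_pow_Ioi hc one_ne_zero e
  have hint := (integrableOn_comp_const_div_pow_Ioi_iff hc one_ne_zero e).2
    (integrableOn_exp_neg_sq_sub_div_Ioi c)
  simp only [Nat.cast_one, one_mul, Nat.reduceAdd, pow_one] at hinv hint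
  rw [setIntegral_congr_fun measurableSet_Ioi he_inv] at hinv
  have hgauss : ∫ x in Ioi 0, (1 + c / x ^ 2) * e x = √π := by
    simpa using (integral_comp_sub_div_Ioi hc fun u => exp (-u ^ 2)).trans
      (by simpa using integral_gaussian 1)
  simp only [add_mul, one_mul] at hgauss
  rw [integral_add (integrableOn_exp_neg_sq_sub_div_Ioi c)
    ((integrableOn_congr_fun he_inv measurableSet_Ioi).1 hint), hinv] at hgauss
  linarith

end Glasser

lemma rpow_neg_three_halves_div_sq {α s : ℝ} (hα : 0 ≤ α) (hs : 0 < s) :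
    (α / s ^ 2) ^ (-(3 : ℝ) / 2) = s ^ 3 / (α * √α) := by
  have hsq : α / s ^ 2 = (√α / s) ^ 2 := by rw [div_pow, sq_sqrt hα]
  have hcube : √α ^ 3 = α * √α := by rw [pow_succ, sq_sqrt hα]
  rw [hsq, ← rpow_natCast, ← rpow_mul (by positivity), show ((2 : ℕ) : ℝ) * (-3 / 2) = -(3 : ℕ) by
    norm_num, rpow_neg (by positivity), rpow_natCast, div_pow, inv_div, hcube]

lemma slater_integrand_comp_div_sq {α ρ s : ℝ} (hα : 0 < α) (hρ : 0 ≤ ρ) (hs : 0 < s) :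
    (2 * α / s ^ 3) * ((α / s ^ 2) ^ (-(3 : ℝ) / 2) * exp (-(α / (α / s ^ 2)) - ρ * (α / s ^ 2)))
      = 2 * exp (-(2 * √(α * ρ))) / √α * exp (-(s - √(α * ρ) / s) ^ 2) := by
  have hexp : -(α / (α / s ^ 2)) - ρ * (α / s ^ 2) =
      -(2 * √(α * ρ)) + -(s - √(α * ρ) / s) ^ 2 := by
    have := sq_sqrt (mul_nonneg hα.le hρ)
    field_simp
    linear_combination this
  rw [rpow_neg_three_halves_div_sq hα.le hs, hexp, exp_add]
  field_simp

/-- **Laplace transform representation of the Slater function** (formula (4.12),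
Khoromskaia–Khoromskij): for `α > 0` and `ρ > 0`,
`e^{−2√(αρ)} = (√α/√π) ∫₀^∞ τ^{−3/2} e^{−α/τ − ρτ} dτ`. -/
theorem slater_function_laplace_transform (α ρ : ℝ) (hα : 0 < α) (hρ : 0 < ρ) :
    Real.exp (-(2 * Real.sqrt (α * ρ))) =
      (Real.sqrt α / Real.sqrt π) *
        ∫ τ in Set.Ioi (0 : ℝ), τ ^ (-(3 : ℝ) / 2) * Real.exp (-(α / τ) - ρ * τ) := by
  have hsubst := integral_comp_const_div_pow_Ioi hα two_ne_zero
    fun τ => τ ^ (-(3 : ℝ) / 2) * exp (-(α / τ) - ρ * τ)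
  simp only [smul_eq_mul, Nat.cast_ofNat, Nat.reduceAdd] at hsubst
  rw [← hsubst, setIntegral_congr_fun measurableSet_Ioi
      fun s (hs : 0 < s) => slater_integrand_comp_div_sq hα hρ.le hs,
    integral_const_mul, integral_exp_neg_sq_sub_div_Ioi (sqrt_pos.2 (mul_pos hα hρ))]
  have hsqrt_α := sqrt_pos.2 hα
  have hsqrt_π := sqrt_pos.2 pi_pos
  field_simp
end

section
/- Let A = Σ_{ν=1}^{R} ξ_ν u_ν^{(1)} ⊗ ⋯ ⊗ u_ν^{(d)} be an order-d canonical tensor, and for each ℓ let U^{(ℓ)} = [u_1^{(ℓ)} ⋯ u_R^{(ℓ)}] ∈ ℝ^{n×R} admit a singular value decomposition with rank-r_ℓ truncation W^{(ℓ)} = Z₀^{(ℓ)} D_{ℓ,0} (V₀^{(ℓ)})^T, where Z₀^{(ℓ)} ∈ ℝ^{n×r_ℓ} has orthonormal columns, D_{ℓ,0} = diag(σ_{ℓ,1},…,σ_{ℓ,r_ℓ}), and V₀^{(ℓ)} ∈ ℝ^{R×r_ℓ}. Then the RHOSVD tensor A⁰ := Σ_{ν=1}^{R} ξ_ν w_ν^{(1)}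 ⊗ ⋯ ⊗ w_ν^{(d)} (w_ν^{(ℓ)} the ν-th column of W^{(ℓ)}) equals the Tucker tensor β₀ ×₁ Z₀^{(1)} ⋯ ×_d Z₀^{(d)} whose core β₀ ∈ ℝ^{r₁×⋯×r_d} is itself a rank-R canonical tensor: β₀(k₁,…,k_d) = Σ_{ν=1}^{R} ξ_ν ∏_{ℓ=1}^{d} σ_{ℓ,k_ℓ} V₀^{(ℓ)}(ν,k_ℓ). -/
open Finset

lemma sum_ite_castLE {m r : ℕ} (h : r ≤ m) (f : Fin m → ℝ) :
    (∑ k : Fin m, if (k : ℕ) < r then f k else 0) = ∑ k : Fin r, f (Fin.castLE h k) := by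
  rw [Finset.sum_ite, Finset.sum_const_zero, add_zero]
  refine Finset.sum_bij' (i := fun k hk => Fin.castLT k (Finset.mem_filter.mp hk).2)
    (j := fun k _ => Fin.castLE h k) ?_ ?_ ?_ ?_ ?_
  all_goals intros; first | (apply congrArg; exact Fin.ext rfl) | simp_all [Fin.ext_iff]

/-- **RHOSVD as a mixed Tucker-canonical tensor** (Proposition 2.1 / Definition 2.2,
Khoromskaia–Khoromskij). The RHOSVD approximation `A⁰` of a rank-`R` canonical tensor,
obtained by rank-`r ℓ` truncated SVDs `W^{(ℓ)} = Z₀^{(ℓ)} D_{ℓ,0} (V₀^{(ℓ)})^T` of the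
side matrices, equals the Tucker tensor `β₀ ×₁ Z₀^{(1)} ⋯ ×_d Z₀^{(d)}` whose core
`β₀(k) = Σ_ν ξ_ν ∏_ℓ σ_{ℓ,k_ℓ} V₀^{(ℓ)}(ν,k_ℓ)` is itself a rank-`R` canonical tensor. -/
theorem rhosvd_mixed_tucker_canonical
    (d n R : ℕ)
    (ξ : Fin R → ℝ)
    (u : Fin d → Fin R → Fin n → ℝ)
    (σ : Fin d → Fin (min n R) → ℝ)
    (z : Fin d → Fin (min n R) → Fin n → ℝ)
    (v : Fin d → Fin (min n R) → Fin R → ℝ)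
    (hσ : ∀ ℓ k, 0 ≤ σ ℓ k)
    (hz : ∀ ℓ k k', ∑ i, z ℓ k i * z ℓ k' i = if k = k' then (1:ℝ) else 0)
    (hv : ∀ ℓ k k', ∑ ν, v ℓ k ν * v ℓ k' ν = if k = k' then (1:ℝ) else 0)
    (hSVD : ∀ ℓ ν i, u ℓ ν i = ∑ k, σ ℓ k * z ℓ k i * v ℓ k ν)
    (r : Fin d → ℕ) (hr : ∀ ℓ, r ℓ ≤ min n R)
    (w : Fin d → Fin R → Fin n → ℝ)
    (hw : ∀ ℓ ν i, w ℓ ν i =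
      ∑ k : Fin (min n R), if (k : ℕ) < r ℓ then σ ℓ k * z ℓ k i * v ℓ k ν else 0)
    (A0 : (Fin d → Fin n) → ℝ)
    (hA0 : ∀ i, A0 i = ∑ ν, ξ ν * ∏ ℓ, w ℓ ν (i ℓ))
    (β : (∀ ℓ : Fin d, Fin (r ℓ)) → ℝ)
    (hβ : ∀ k, β k = ∑ ν, ξ ν *
      ∏ ℓ, σ ℓ (Fin.castLE (hr ℓ) (k ℓ)) * v ℓ (Fin.castLE (hr ℓ) (k ℓ)) ν) :
    ∀ i, A0 i = ∑ k : (∀ ℓ : Fin d, Fin (r ℓ)),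
      β k * ∏ ℓ, z ℓ (Fin.castLE (hr ℓ) (k ℓ)) (i ℓ) := by
  intro i
  have hw' : ∀ ℓ ν, w ℓ ν (i ℓ) = ∑ k : Fin (r ℓ),
      σ ℓ (Fin.castLE (hr ℓ) k) * z ℓ (Fin.castLE (hr ℓ) k) (i ℓ) *
        v ℓ (Fin.castLE (hr ℓ) k) ν := fun ℓ ν => by
    rw [hw, sum_ite_castLE (hr ℓ)]
  calc A0 i = ∑ ν, ξ ν * ∑ k : (∀ ℓ : Fin d, Fin (r ℓ)),
        ∏ ℓ, (σ ℓ (Fin.castLE (hr ℓ) (k ℓ)) * z ℓ (Fin.castLE (hr ℓ) (k ℓ)) (i ℓ) *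
          v ℓ (Fin.castLE (hr ℓ) (k ℓ)) ν) := by
        rw [hA0]
        refine Finset.sum_congr rfl fun ν _ => ?_
        congr 1
        simp only [hw']
        rw [Finset.prod_univ_sum]
        rw [← Fintype.piFinset_univ]
    _ = ∑ k : (∀ ℓ : Fin d, Fin (r ℓ)),
        β k * ∏ ℓ, z ℓ (Fin.castLE (hr ℓ) (k ℓ)) (i ℓ) := by
        simp only [Finset.mul_sum, hβ, Finset.sum_mul]
        rw [Finset.sum_comm]
        refine Finset.sum_congr rfl fun k _ => Finset.sum_congr rfl fun ν _ => ?_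
        rw [mul_assoc, ← Finset.prod_mul_distrib]
        congr 1
        exact Finset.prod_congr rfl fun ℓ _ => by ring
end
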